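/- arXiv:1801.05911 — 5 statements merged into one kernel-verified Lean document; each statement's English description precedes it below -/
import Mathlib

section
/- For any number of candidates k ≥ 3 and any odd number of voters n ≥ 3, the Borda count never produces social disappointment: if a candidate is ranked last by at least n/2 (hence at least (n+1)/2) of the voters, that candidate is never a Borda winner. -/
/-!
Each voter hands out `0 + 1 + ⋯ + (k - 1) = k(k - 1)/2` Borda points, so a Borda winner, scoring at
least the average, has at least `n(k - 1)/2` points. A candidate ranked last by `s` voters scores at
most `(n - s)(k - 1)`; when `n` is odd and `2s ≥ n`, i.e. `2s ≥ n + 1`, this is at most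
`(n - 1)(k - 1)/2`, which is below the winning threshold as soon as `k ≥ 2`.
-/

open Finset

section Relation

variable {A : Type*}

lemma natCard_rel_eq_zero_of_forall_rel {r : A → A → Prop} [Std.Asymm r] {x : A}
    (hx : ∀ y, y ≠ x → r y x) : Nat.card {y // r x y} = 0 :=
  Nat.card_eq_zero.2 (Or.inl ⟨fun ⟨y, hxy⟩ ↦ asymm hxy (hx y (ne_of_irrefl' hxy))⟩)

variable [Fintype A]

lemma natCard_rel_le_card_sub_one (r : A → A → Prop) [Std.Irrefl r] (x : A) :
    Nat.card {y // r x y} ≤ Fintype.card A - 1 := by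
  classical
  rw [Nat.card_eq_fintype_card, Fintype.card_subtype, ← card_univ,
    ← card_erase_of_mem (mem_univ x)]
  exact card_le_card fun y hy ↦
    mem_erase.2 ⟨fun h ↦ irrefl_of r y (h ▸ (mem_filter.1 hy).2), mem_univ y⟩

lemma natCard_rel_add_natCard_rel_swap (r : A → A → Prop) [Std.Asymm r] [Std.Trichotomous r]
    (x : A) : Nat.card {y // r x y} + Nat.card {y // r y x} = Fintype.card A - 1 := by
  classical
  have hne : ∀ y, r x y ∨ r y x ↔ y ≠ x := fun y ↦ by
    rcases trichotomous_of r x y with h | rfl | h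
    · exact ⟨fun _ ↦ ne_of_irrefl' h, fun _ ↦ Or.inl h⟩
    · simp [irrefl_of r x]
    · exact ⟨fun _ ↦ ne_of_irrefl h, fun _ ↦ Or.inr h⟩
  simp only [Nat.card_eq_fintype_card, Fintype.card_subtype]
  rw [← card_union_of_disjoint (disjoint_filter.2 fun y _ ↦ asymm), ← filter_or,
    filter_congr fun y _ ↦ hne y, filter_ne', card_erase_of_mem (mem_univ x), card_univ]

lemma two_mul_sum_natCard_rel (r : A → A → Prop) [Std.Asymm r] [Std.Trichotomous r] :
    2 * ∑ x, Nat.card {y // r x y} = Fintype.card A * (Fintype.card A - 1) := by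
  classical
  have hswap : ∑ x, Nat.card {y // r x y} = ∑ x, Nat.card {y // r y x} := by
    simp only [Nat.card_eq_fintype_card, Fintype.card_subtype]
    exact sum_card_bipartiteAbove_eq_sum_card_bipartiteBelow r
  rw [two_mul]
  nth_rw 2 [hswap]
  rw [← sum_add_distrib]
  simp only [natCard_rel_add_natCard_rel_swap, sum_const, card_univ, smul_eq_mul]

end Relation

section Borda

variable {ι A : Type*} [Fintype ι] [Fintype A]

noncomputable def bordaScore (P : ι → A → A → Prop) (x : A) : ℕ :=
  ∑ i, Nat.card {y // P i x y}

lemma two_mul_sum_bordaScore (P : ι → A → A → Prop) [∀ i, Std.Asymm (P i)]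
    [∀ i, Std.Trichotomous (P i)] :
    2 * ∑ x, bordaScore P x = Fintype.card ι * (Fintype.card A * (Fintype.card A - 1)) := by
  simp only [bordaScore]
  rw [sum_comm, mul_sum]
  simp only [two_mul_sum_natCard_rel, sum_const, card_univ, smul_eq_mul]

lemma card_mul_le_two_mul_bordaScore_of_forall_le {P : ι → A → A → Prop}
    [∀ i, Std.Asymm (P i)] [∀ i, Std.Trichotomous (P i)] {x : A}
    (hx : ∀ z, bordaScore P z ≤ bordaScore P x) :
    Fintype.card ι * (Fintype.card A - 1) ≤ 2 * bordaScore P x := by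
  have hk : 0 < Fintype.card A := Fintype.card_pos_iff.2 ⟨x⟩
  refine Nat.le_of_mul_le_mul_left ?_ hk
  calc Fintype.card A * (Fintype.card ι * (Fintype.card A - 1))
      = 2 * ∑ z, bordaScore P z := by rw [two_mul_sum_bordaScore]; ring
    _ ≤ 2 * ∑ _z : A, bordaScore P x := by gcongr with z; exact hx z
    _ = Fintype.card A * (2 * bordaScore P x) := by
      simp only [sum_const, card_univ, smul_eq_mul]; ring

lemma bordaScore_le_of_ranked_last (P : ι → A → A → Prop) [∀ i, Std.Asymm (P i)] (x : A) :
    bordaScore P x ≤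
      (Fintype.card ι - Nat.card {i // ∀ y, y ≠ x → P i y x}) * (Fintype.card A - 1) := by
  classical
  let IsLast (i : ι) : Prop := ∀ y, y ≠ x → P i y x
  have hcard : #{i | ¬ IsLast i} = Fintype.card ι - Nat.card {i // IsLast i} := by
    rw [Nat.card_eq_fintype_card, Fintype.card_subtype, ← card_univ,
      ← card_filter_add_card_filter_not (s := univ) IsLast, Nat.add_sub_cancel_left]
  calc bordaScore P x
      = ∑ i with IsLast i, Nat.card {y // P i x y} +
          ∑ i with ¬ IsLast i, Nat.card {y // P i x y} :=
        (sum_filter_add_sum_filter_not _ _ _).symm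
    _ = ∑ i with ¬ IsLast i, Nat.card {y // P i x y} := by
      rw [sum_eq_zero fun i hi ↦ natCard_rel_eq_zero_of_forall_rel (mem_filter.1 hi).2, zero_add]
    _ ≤ #{i | ¬ IsLast i} * (Fintype.card A - 1) :=
        sum_le_card_nsmul _ _ _ fun i _ ↦ natCard_rel_le_card_sub_one (P i) x
    _ = _ := by rw [hcard]

end Borda

theorem borda_no_social_disappointment_odd_general
    (A : Type) [Fintype A] (hA : 3 ≤ Fintype.card A)
    (n : ℕ) (hodd : Odd n)
    (P : Fin n → A → A → Prop) (hP : ∀ i, IsStrictTotalOrder A (P i))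
    (x : A)
    (hx : n ≤ 2 * Nat.card {i : Fin n // ∀ y : A, y ≠ x → P i y x}) :
    ¬ (∀ z : A,
        (∑ i : Fin n, Nat.card {y : A // P i z y}) ≤
        (∑ i : Fin n, Nat.card {y : A // P i x y})) := by
  intro hwin
  have := hP
  have hlow := card_mul_le_two_mul_bordaScore_of_forall_le (P := P) hwin
  have hup := bordaScore_le_of_ranked_last P x
  rw [Fintype.card_fin] at hlow hup
  set s := Nat.card {i : Fin n // ∀ y : A, y ≠ x → P i y x}
  have hmaj : n ≤ 2 * (n - s) :=
    Nat.le_of_mul_le_mul_right (by linarith) (by omega : 0 < Fintype.card A - 1)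
  obtain ⟨m, rfl⟩ := hodd
  omega

/-- For k ≥ 3 candidates and an odd number n ≥ 3 of voters, the Borda count never
produces social disappointment: a candidate ranked last by at least n/2 voters
is never a Borda winner. -/
theorem borda_no_social_disappointment_odd
    (A : Type) [Fintype A] (hA : 3 ≤ Fintype.card A)
    (n : ℕ) (hn : 3 ≤ n) (hodd : Odd n)
    (P : Fin n → A → A → Prop) (hP : ∀ i, IsStrictTotalOrder A (P i))
    (x : A)
    (hx : n ≤ 2 * Nat.card {i : Fin n // ∀ y : A, y ≠ x → P i y x}) :
    ¬ (∀ z : A,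
        (∑ i : Fin n, Nat.card {y : A // P i z y}) ≤
        (∑ i : Fin n, Nat.card {y : A // P i x y})) :=
  borda_no_social_disappointment_odd_general A hA n hodd P hP x hx
end

section
/- If |A| ≥ 3, the Least Unpopular (LU) voting procedure satisfies the social disappointment criterion: an alternative ranked last by at least half of the voters is never an LU winner. -/
/-!
A voter ranks at most one alternative last, so the last-place counts sum to at most `n`.
If `x` had the smallest count `lp x`, then `|A| * lp x ≤ n`, i.e. `3 * lp x ≤ n ≤ 2 * lp x`,
which forces `n = 0`.
-/

open Finset

section LastPlace

variable {ι A : Type*}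

/-- The number of voters ranking `z` last, the paper's `lp z`. -/
noncomputable def lastPlaceCount (P : ι → A → A → Prop) (z : A) : ℕ :=
  Nat.card {i : ι // ∀ y : A, y ≠ z → P i y z}

theorem eq_of_ranked_last {r : A → A → Prop} [Std.Asymm r] {a b : A}
    (ha : ∀ y, y ≠ a → r y a) (hb : ∀ y, y ≠ b → r y b) : a = b := by
  by_contra hab
  exact asymm (ha b (Ne.symm hab)) (hb a hab)

theorem sum_lastPlaceCount_le [Fintype ι] [Fintype A] (P : ι → A → A → Prop)
    (hP : ∀ i, Std.Asymm (P i)) : ∑ z, lastPlaceCount P z ≤ Fintype.card ι := by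
  rw [← Nat.card_eq_fintype_card]
  unfold lastPlaceCount
  rw [← Nat.card_sigma]
  refine Nat.card_le_card_of_injective (fun p => p.2.1) ?_
  rintro ⟨a, i, ha⟩ ⟨b, j, hb⟩ (hij : i = j)
  subst hij
  obtain rfl : a = b := @eq_of_ranked_last _ _ (hP i) _ _ ha hb
  rfl

theorem card_mul_lastPlaceCount_le [Fintype ι] [Fintype A] (P : ι → A → A → Prop)
    (hP : ∀ i, Std.Asymm (P i)) {x : A} (hx : ∀ z, lastPlaceCount P x ≤ lastPlaceCount P z) :
    Fintype.card A * lastPlaceCount P x ≤ Fintype.card ι :=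
  calc Fintype.card A * lastPlaceCount P x
      ≤ ∑ z, lastPlaceCount P z := card_nsmul_le_sum _ _ _ fun z _ => hx z
    _ ≤ Fintype.card ι := sum_lastPlaceCount_le P hP

end LastPlace

/-- For |A| ≥ 3, the LU procedure satisfies the social disappointment criterion:
an alternative ranked last by at least half of the voters is never an LU winner. -/
theorem lu_social_disappointment_criterion
    (A : Type) [Fintype A] (hA : 3 ≤ Fintype.card A)
    (n : ℕ) (hn : 0 < n)
    (P : Fin n → A → A → Prop) (hP : ∀ i, IsStrictTotalOrder A (P i))
    (x : A)
    (hx : n ≤ 2 * Nat.card {i : Fin n // ∀ y : A, y ≠ x → P i y x}) :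
    ¬ (∀ z : A,
        Nat.card {i : Fin n // ∀ y : A, y ≠ x → P i y x} ≤
        Nat.card {i : Fin n // ∀ y : A, y ≠ z → P i y z}) := by
  intro hmin
  have hbound := card_mul_lastPlaceCount_le P (fun i => have := hP i; inferInstance) hmin
  rw [Fintype.card_fin] at hbound
  have h3 : 3 * lastPlaceCount P x ≤ Fintype.card A * lastPlaceCount P x :=
    Nat.mul_le_mul_right _ hA
  change n ≤ 2 * lastPlaceCount P x at hx
  omega
end

section
/- In the Condorcet-cycle construction with n+1 alternatives and 2n voters (n ≥ 3), the alternative x_{n+1} is the unique Condorcet winner yet is ranked last by exactly half of the voters. -/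
/-!
The first `n` voters put `x_{n+1}` above every `x_i` and the last `n` put it below, so
`x_{n+1}` ties every other alternative `n : n` and is ranked last exactly by the second half.
Any other alternative `x_z` loses to its cyclic predecessor `x_{z-1}`: only the two voters
whose cyclic order starts at `x_z` rank it higher, so it loses `2 : 2n - 2`, a strict defeat
once `n ≥ 3`.
-/

/-- Rank (0 = first place) of alternative `a` on the ballot of voter `v` in the
Condorcet-cycle construction with alternatives `x_0, …, x_n` (so `x_n` plays the
role of `x_{n+1}` in the paper) and `2n` voters.  For `v < n`, voter `v` ranks
`x_n` first followed by the cyclic order `x_v > x_{v+1} > …`; voter `n + v`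
ranks the cyclic order `x_v > x_{v+1} > …` first and `x_n` last. -/
def cycleRank (n v a : ℕ) : ℕ :=
  if v < n then (if a = n then 0 else ((a + n - v) % n) + 1)
  else (if a = n then n else (a + n - (v - n)) % n)

/-- The profile of the Condorcet-cycle construction: `2n` voters with linear
ballots on the `n + 1` alternatives, given by the ranks `cycleRank`. -/
def cycleProfile (n : ℕ) : Fin (2 * n) → Fin (n + 1) → Fin (n + 1) → Prop :=
  fun v a b => cycleRank n v.val a.val < cycleRank n v.val b.val

lemma card_prefers_add_card_prefers {ι α : Type*} [Fintype ι] (P : ι → α → α → Prop)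
    (hP : ∀ i, IsStrictTotalOrder α (P i)) {y z : α} (hyz : y ≠ z) :
    Nat.card {i // P i y z} + Nat.card {i // P i z y} = Fintype.card ι := by
  classical
  have hcompl (i : ι) : P i y z ↔ ¬ P i z y := by
    have := hP i
    refine ⟨asymm_of (P i), fun h => ?_⟩
    rcases trichotomous_of (P i) y z with h' | h' | h'
    exacts [h', absurd h' hyz, absurd h' h]
  rw [Nat.card_congr (Equiv.subtypeEquivRight hcompl), Nat.card_eq_fintype_card,
    Nat.card_eq_fintype_card, Fintype.card_subtype_compl,
    Nat.sub_add_cancel (Fintype.card_subtype_le _)]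

lemma card_fin_two_mul_val_lt (n : ℕ) : Nat.card {i : Fin (2 * n) // i.val < n} = n := by
  rw [Nat.card_eq_fintype_card, Fintype.card_subtype, Fin.card_filter_val_lt]
  omega

lemma card_fin_two_mul_le_val (n : ℕ) : Nat.card {i : Fin (2 * n) // n ≤ i.val} = n := by
  have h := card_fin_two_mul_val_lt n
  rw [Nat.card_congr (Equiv.subtypeEquivRight fun i => not_lt.symm), Nat.card_eq_fintype_card,
    Fintype.card_subtype_compl, Fintype.card_fin, ← Nat.card_eq_fintype_card, h]
  omega

lemma card_fin_two_mul_val_eq_or {n z : ℕ} (hz : z < n) :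
    Nat.card {i : Fin (2 * n) // i.val = z ∨ i.val = z + n} = 2 := by
  let a : Fin (2 * n) := ⟨z, by omega⟩
  let b : Fin (2 * n) := ⟨z + n, by omega⟩
  have hab : a ≠ b := Fin.ne_of_val_ne (by change z ≠ z + n; omega)
  rw [Nat.card_congr (Equiv.subtypeEquivRight fun i => by simp [Fin.ext_iff, a, b] :
      {i : Fin (2 * n) // i.val = z ∨ i.val = z + n} ≃ ({a, b} : Set (Fin (2 * n)))),
    Nat.card_coe_set_eq, Set.ncard_pair hab]

/-- Position of `x_a` in the cyclic order `x_w > x_{w+1} > ⋯ > x_{w-1}` of `x_0, …, x_{n-1}`. -/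
def cyclicPos (n w a : ℕ) : ℕ := (a + n - w) % n

lemma cyclicPos_lt {n : ℕ} (hn : 0 < n) (w a : ℕ) : cyclicPos n w a < n :=
  Nat.mod_lt _ hn

lemma cyclicPos_eq_ite {n w a : ℕ} (hw : w ≤ n) (ha : a < n) :
    cyclicPos n w a = if w ≤ a then a - w else a + n - w := by
  unfold cyclicPos
  split_ifs with h
  · rw [show a + n - w = a - w + n by omega, Nat.add_mod_right, Nat.mod_eq_of_lt (by omega)]
  · exact Nat.mod_eq_of_lt (by omega)

lemma cyclicPos_injOn {n w : ℕ} (hw : w ≤ n) : Set.InjOn (cyclicPos n w) (Set.Iio n) := by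
  intro a ha b hb h
  rw [Set.mem_Iio] at ha hb
  rw [cyclicPos_eq_ite hw ha, cyclicPos_eq_ite hw hb] at h
  split_ifs at h <;> omega

lemma cyclicPos_one_ne {n z : ℕ} (hn : 2 ≤ n) (hz : z < n) : cyclicPos n 1 z ≠ z := by
  rw [cyclicPos_eq_ite (by omega) hz]
  split_ifs <;> omega

/-- `cyclicPos n 1 z = (z - 1) mod n` is the cyclic predecessor of `z`; `x_z` precedes it only
in the cyclic order starting at `x_z`. -/
lemma cyclicPos_lt_cyclicPos_pred_iff {n w z : ℕ} (hn : 2 ≤ n) (hw : w < n) (hz : z < n) :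
    cyclicPos n w z < cyclicPos n w (cyclicPos n 1 z) ↔ w = z := by
  generalize hp : cyclicPos n 1 z = p
  have hpn : p < n := by rw [← hp]; exact cyclicPos_lt (by omega) 1 z
  rw [cyclicPos_eq_ite (by omega) hz] at hp
  rw [cyclicPos_eq_ite hw.le hz, cyclicPos_eq_ite hw.le hpn]
  split_ifs at hp ⊢ <;> omega

lemma cycleRank_last_of_lt {n v : ℕ} (hv : v < n) : cycleRank n v n = 0 := by
  simp [cycleRank, hv]

lemma cycleRank_last_of_le {n v : ℕ} (hv : n ≤ v) : cycleRank n v n = n := by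
  simp [cycleRank, hv.not_gt]

lemma cycleRank_of_lt {n v a : ℕ} (hv : v < n) (ha : a < n) :
    cycleRank n v a = cyclicPos n v a + 1 := by
  simp [cycleRank, cyclicPos, hv, ha.ne]

lemma cycleRank_of_le {n v a : ℕ} (hv : n ≤ v) (ha : a < n) :
    cycleRank n v a = cyclicPos n (v - n) a := by
  simp [cycleRank, cyclicPos, hv.not_gt, ha.ne]

lemma cycleRank_injOn {n v : ℕ} (hv : v < 2 * n) : Set.InjOn (cycleRank n v) (Set.Iic n) := by
  intro a ha b hb h
  have hn : 0 < n := by omega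
  have := cyclicPos_lt hn (v - n) a
  have := cyclicPos_lt hn (v - n) b
  rcases (Set.mem_Iic.1 ha).lt_or_eq with ha | ha <;>
    rcases (Set.mem_Iic.1 hb).lt_or_eq with hb | hb <;>
    rcases lt_or_ge v n with hv' | hv'
  all_goals
    simp only [cycleRank_of_lt, cycleRank_of_le, cycleRank_last_of_lt, cycleRank_last_of_le,
      ha, hb, hv'] at h
  · exact cyclicPos_injOn hv'.le ha hb (by omega)
  · exact cyclicPos_injOn (by omega) ha hb h
  all_goals omega

lemma isStrictTotalOrder_cycleProfile (n : ℕ) (v : Fin (2 * n)) :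
    IsStrictTotalOrder (Fin (n + 1)) (cycleProfile n v) :=
  Function.Injective.isStrictTotalOrder_onFun (r := (· < ·))
    (f := fun a : Fin (n + 1) => cycleRank n v a)
    fun a b h => Fin.ext (cycleRank_injOn v.isLt (Fin.is_le a) (Fin.is_le b) h)

lemma cycleProfile_last_left_iff {n : ℕ} {y : Fin (n + 1)} (hy : y ≠ Fin.last n)
    (i : Fin (2 * n)) :
    cycleProfile n i (Fin.last n) y ↔ i.val < n := by
  have hyn := Fin.val_lt_last hy
  have := cyclicPos_lt (n := n) (by omega) (i.val - n) y
  unfold cycleProfile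
  rcases lt_or_ge i.val n with hi | hi
  · rw [Fin.val_last, cycleRank_of_lt hi hyn, cycleRank_last_of_lt hi]
    omega
  · rw [Fin.val_last, cycleRank_of_le hi hyn, cycleRank_last_of_le hi]
    omega

lemma cycleProfile_last_right_iff {n : ℕ} {y : Fin (n + 1)} (hy : y ≠ Fin.last n)
    (i : Fin (2 * n)) :
    cycleProfile n i y (Fin.last n) ↔ n ≤ i.val := by
  have hyn := Fin.val_lt_last hy
  have := cyclicPos_lt (n := n) (by omega) (i.val - n) y
  unfold cycleProfile
  rcases lt_or_ge i.val n with hi | hi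
  · rw [Fin.val_last, cycleRank_of_lt hi hyn, cycleRank_last_of_lt hi]
    omega
  · rw [Fin.val_last, cycleRank_of_le hi hyn, cycleRank_last_of_le hi]
    omega

lemma cycleProfile_pred_iff {n : ℕ} (hn : 2 ≤ n) {y z : Fin (n + 1)} (hz : z ≠ Fin.last n)
    (hy : y.val = cyclicPos n 1 z) (i : Fin (2 * n)) :
    cycleProfile n i z y ↔ i.val = z.val ∨ i.val = z.val + n := by
  have hzn := Fin.val_lt_last hz
  have hyn : y.val < n := by rw [hy]; exact cyclicPos_lt (by omega) 1 z
  unfold cycleProfile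
  rcases lt_or_ge i.val n with hi | hi
  · rw [cycleRank_of_lt hi hzn, cycleRank_of_lt hi hyn, hy, add_lt_add_iff_right,
      cyclicPos_lt_cyclicPos_pred_iff hn hi hzn]
    omega
  · rw [cycleRank_of_le hi hzn, cycleRank_of_le hi hyn, hy,
      cyclicPos_lt_cyclicPos_pred_iff hn (by omega) hzn]
    omega

/-- In the Condorcet-cycle construction with `n + 1` alternatives and `2n` voters
(`n ≥ 3`), the alternative `x_{n+1}` (here `Fin.last n`) is the unique Condorcet
winner, yet it is ranked last by exactly half of the voters. -/
theorem cycle_construction_unique_condorcet_winner_ranked_last_by_half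
    (n : ℕ) (hn : 3 ≤ n) :
    -- every ballot is a linear order
    (∀ v, IsStrictTotalOrder (Fin (n + 1)) (cycleProfile n v)) ∧
    -- x_{n+1} is a Condorcet winner
    (∀ y : Fin (n + 1), y ≠ Fin.last n →
      Nat.card {i : Fin (2 * n) // cycleProfile n i y (Fin.last n)} ≤
      Nat.card {i : Fin (2 * n) // cycleProfile n i (Fin.last n) y}) ∧
    -- and it is the unique Condorcet winner
    (∀ z : Fin (n + 1),
      (∀ y : Fin (n + 1),
        Nat.card {i : Fin (2 * n) // cycleProfile n i y z} ≤
        Nat.card {i : Fin (2 * n) // cycleProfile n i z y}) →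
      z = Fin.last n) ∧
    -- x_{n+1} is ranked last by exactly n of the 2n voters
    Nat.card {i : Fin (2 * n) //
      ∀ y : Fin (n + 1), y ≠ Fin.last n → cycleProfile n i y (Fin.last n)} = n := by
  refine ⟨isStrictTotalOrder_cycleProfile n, fun y hy => ?_, fun z hz => ?_, ?_⟩
  · rw [Nat.card_congr (Equiv.subtypeEquivRight (cycleProfile_last_right_iff hy)),
      Nat.card_congr (Equiv.subtypeEquivRight (cycleProfile_last_left_iff hy)),
      card_fin_two_mul_le_val, card_fin_two_mul_val_lt]
  · by_contra hzl
    let y : Fin (n + 1) :=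
      ⟨cyclicPos n 1 z, (cyclicPos_lt (by omega) 1 z).trans n.lt_succ_self⟩
    have hyz : y ≠ z := fun h =>
      cyclicPos_one_ne (by omega) (Fin.val_lt_last hzl) congr(($h).val)
    have hzy : Nat.card {i // cycleProfile n i z y} = 2 := by
      rw [Nat.card_congr (Equiv.subtypeEquivRight (cycleProfile_pred_iff (by omega) hzl rfl)),
        card_fin_two_mul_val_eq_or (Fin.val_lt_last hzl)]
    have hsum := card_prefers_add_card_prefers _ (isStrictTotalOrder_cycleProfile n) hyz
    have := hz y
    simp only [Fintype.card_fin] at hsum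
    omega
  · have hlast (i : Fin (2 * n)) :
        (∀ y : Fin (n + 1), y ≠ Fin.last n → cycleProfile n i y (Fin.last n)) ↔
          n ≤ i.val := by
      have h0 : (0 : Fin (n + 1)) ≠ Fin.last n := by
        rw [Ne, Fin.ext_iff, Fin.val_zero, Fin.val_last]; omega
      exact ⟨fun h => (cycleProfile_last_right_iff h0 i).1 (h 0 h0),
        fun h y hy => (cycleProfile_last_right_iff hy i).2 h⟩
    rw [Nat.card_congr (Equiv.subtypeEquivRight hlast), card_fin_two_mul_le_val]
end

section
/- For exactly three alternatives, the unique-Condorcet-Coombs (UCC) hybrid rule satisfies both the Condorcet winner criterion and the social disappointment criterion. -/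
/-!
Each voter ranks at most one alternative last, so the last-place counts sum to at most `n`.
If `x` is ranked last by at least `n / 2` voters, every other alternative is ranked last by at
most `n / 2` of them, so `x` has the most last-place votes; with at least three alternatives and
`n > 0` the counts cannot all tie, so Coombs deletes `x` in the first round. A Condorcet winner
`x` beats some `y`, and the voters ranking `x` last all prefer `y` to `x`: they form a minority
disjoint from the majority preferring `x` to `y`, so fewer than `n / 2` voters rank `x` last.
-/

open Classical in
/-- Number of voters who rank `x` last among the surviving set `S`. -/
noncomputable def lastPlaceVotes {A : Type} [Fintype A] {n : ℕ}
    (P : Fin n → A → A → Prop) (S : Finset A) (x : A) : ℕ :=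
  Nat.card {i : Fin n // ∀ y ∈ S, y ≠ x → P i y x}

open Classical in
/-- One round of the Coombs procedure: delete the alternatives with the most
last-place votes among the survivors, unless all survivors are tied. -/
noncomputable def coombsStep {A : Type} [Fintype A] {n : ℕ}
    (P : Fin n → A → A → Prop) (S : Finset A) : Finset A :=
  if ∀ x ∈ S, ∀ y ∈ S, lastPlaceVotes P S x = lastPlaceVotes P S y then S
  else S.filter (fun x => ∃ y ∈ S, lastPlaceVotes P S x < lastPlaceVotes P S y)

/-- The Coombs winners: repeatedly delete the alternatives with the most
last-place votes until the surviving set stabilizes. -/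
noncomputable def coombsWinners {A : Type} [Fintype A] {n : ℕ}
    (P : Fin n → A → A → Prop) : Finset A :=
  (coombsStep P)^[Fintype.card A] Finset.univ

open Classical in
/-- The unique-Condorcet Coombs (UCC) hybrid rule: elect the alternative beating
all others in strict pairwise majority contests when it exists, otherwise elect
the Coombs winners. -/
noncomputable def uccWinners {A : Type} [Fintype A] {n : ℕ}
    (P : Fin n → A → A → Prop) : Finset A :=
  if h : ∃ x : A, ∀ y : A, y ≠ x →
      Nat.card {i : Fin n // P i y x} < Nat.card {i : Fin n // P i x y} then
    {h.choose}
  else coombsWinners P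

section Counting

variable {ι : Type*} [Fintype ι]

theorem card_add_card_le_of_disjoint (p q : ι → Prop) (h : ∀ i, p i → ¬ q i) :
    Nat.card {i // p i} + Nat.card {i // q i} ≤ Fintype.card ι := by
  classical
  simp only [Nat.card_eq_fintype_card]
  have hdisj : Disjoint p q := disjoint_iff_inf_le.mpr fun i ⟨hp, hq⟩ => h i hp hq
  rw [← Fintype.card_subtype_or_disjoint p q hdisj]
  exact Fintype.card_subtype_le _

theorem sum_card_le_of_pairwise_disjoint {α : Type*} (s : Finset α) (p : α → ι → Prop)
    (h : (s : Set α).Pairwise fun a b => ∀ i, p a i → ¬ p b i) :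
    ∑ a ∈ s, Nat.card {i // p a i} ≤ Fintype.card ι := by
  classical
  simp only [Nat.card_eq_fintype_card, Fintype.card_subtype]
  rw [← Finset.card_biUnion]
  · exact Finset.card_le_univ _
  · intro a ha b hb hab
    exact Finset.disjoint_filter.mpr fun i _ => h ha hb hab i

end Counting

section Voting

variable {A : Type} {n : ℕ} (P : Fin n → A → A → Prop)

def IsCondorcetWinner (x : A) : Prop :=
  ∀ y : A, y ≠ x → Nat.card {i : Fin n // P i y x} < Nat.card {i : Fin n // P i x y}

variable {P}

theorem IsCondorcetWinner.eq {x y : A} (hx : IsCondorcetWinner P x)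
    (hy : IsCondorcetWinner P y) : x = y := by
  by_contra hxy
  have := hx y (Ne.symm hxy)
  have := hy x hxy
  omega

variable [Fintype A]

theorem uccWinners_eq_singleton {x : A} (hx : IsCondorcetWinner P x) : uccWinners P = {x} := by
  have hex : ∃ z : A, ∀ y : A, y ≠ z →
      Nat.card {i : Fin n // P i y z} < Nat.card {i : Fin n // P i z y} := ⟨x, hx⟩
  rw [uccWinners, dif_pos hex, IsCondorcetWinner.eq hex.choose_spec hx]

theorem uccWinners_eq_coombsWinners (h : ¬ ∃ z : A, IsCondorcetWinner P z) :
    uccWinners P = coombsWinners P :=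
  dif_neg h

theorem lastPlaceVotes_univ (x : A) :
    lastPlaceVotes P Finset.univ x = Nat.card {i : Fin n // ∀ y : A, y ≠ x → P i y x} := by
  simp only [lastPlaceVotes, Finset.mem_univ, true_imp_iff]

variable (hP : ∀ i, Std.Asymm (P i))
include hP

theorem IsCondorcetWinner.two_mul_lastPlaceVotes_lt {x y : A} (hx : IsCondorcetWinner P x)
    (hyx : y ≠ x) : 2 * lastPlaceVotes P Finset.univ x < n := by
  rw [lastPlaceVotes_univ]
  have hlast_le : Nat.card {i : Fin n // ∀ z : A, z ≠ x → P i z x}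
      ≤ Nat.card {i : Fin n // P i y x} :=
    Nat.card_mono (Set.toFinite _) fun i hi => hi y hyx
  have hsum := card_add_card_le_of_disjoint (fun i => P i x y)
    (fun i => ∀ z : A, z ≠ x → P i z x) fun i hxy hlast => asymm (hlast y hyx) hxy
  rw [Fintype.card_fin] at hsum
  have := hx y hyx
  omega

theorem sum_lastPlaceVotes_le (S : Finset A) : ∑ x ∈ S, lastPlaceVotes P S x ≤ n := by
  simpa [lastPlaceVotes] using sum_card_le_of_pairwise_disjoint S
    (fun x i => ∀ y ∈ S, y ≠ x → P i y x) fun x hx y hy hxy i hlast_x hlast_y =>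
      asymm (hlast_x y hy (Ne.symm hxy)) (hlast_y x hx hxy)

theorem lastPlaceVotes_add_le {S : Finset A} {x y : A} (hx : x ∈ S) (hy : y ∈ S)
    (hxy : x ≠ y) :
    lastPlaceVotes P S x + lastPlaceVotes P S y ≤ n := by
  classical
  simpa [Finset.sum_pair hxy] using
    (Finset.sum_le_sum_of_subset (f := lastPlaceVotes P S) (Finset.insert_subset hx
      (Finset.singleton_subset_iff.mpr hy))).trans (sum_lastPlaceVotes_le hP S)

end Voting

section Coombs

variable {A : Type} [Fintype A] {n : ℕ} {P : Fin n → A → A → Prop}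

theorem coombsStep_subset (S : Finset A) : coombsStep P S ⊆ S := by
  unfold coombsStep
  split_ifs
  exacts [subset_rfl, Finset.filter_subset _ _]

theorem iterate_coombsStep_subset (k : ℕ) (S : Finset A) : (coombsStep P)^[k] S ⊆ S := by
  induction k generalizing S with
  | zero => exact subset_rfl
  | succ k ih => exact (ih _).trans (coombsStep_subset S)

theorem coombsWinners_subset_coombsStep_univ [Nonempty A] :
    coombsWinners P ⊆ coombsStep P Finset.univ := by
  obtain ⟨k, hk⟩ := Nat.exists_eq_succ_of_ne_zero (Fintype.card_ne_zero (α := A))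
  rw [coombsWinners, hk, Function.iterate_succ_apply]
  exact iterate_coombsStep_subset k _

variable (hP : ∀ i, Std.Asymm (P i))
include hP

theorem notMem_coombsStep_of_le_two_mul {S : Finset A} {x : A} (hS : 3 ≤ S.card) (hn : 0 < n)
    (hx : x ∈ S) (hlast : n ≤ 2 * lastPlaceVotes P S x) : x ∉ coombsStep P S := by
  have hnot_tied : ¬ ∀ y ∈ S, ∀ z ∈ S, lastPlaceVotes P S y = lastPlaceVotes P S z := by
    intro htied
    have := Finset.sum_const_nat (fun y hy => htied y hy x hx) ▸ sum_lastPlaceVotes_le hP S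
    nlinarith
  rw [coombsStep, if_neg hnot_tied, Finset.mem_filter]
  rintro ⟨-, y, hy, hlt⟩
  have := lastPlaceVotes_add_le hP hx hy (by rintro rfl; omega)
  omega

theorem notMem_coombsWinners_of_le_two_mul (hA : 3 ≤ Fintype.card A) (hn : 0 < n) {x : A}
    (hlast : n ≤ 2 * lastPlaceVotes P Finset.univ x) : x ∉ coombsWinners P := by
  have : Nonempty A := ⟨x⟩
  exact fun hx => notMem_coombsStep_of_le_two_mul hP hA hn (Finset.mem_univ x) hlast
    (coombsWinners_subset_coombsStep_univ hx)

theorem notMem_uccWinners_of_le_two_mul (hA : 3 ≤ Fintype.card A) (hn : 0 < n) {x : A}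
    (hlast : n ≤ 2 * lastPlaceVotes P Finset.univ x) : x ∉ uccWinners P := by
  have : Nontrivial A := Fintype.one_lt_card_iff_nontrivial.mp (by omega)
  by_cases hcw : ∃ z : A, IsCondorcetWinner P z
  · obtain ⟨z, hz⟩ := hcw
    rw [uccWinners_eq_singleton hz, Finset.mem_singleton]
    rintro rfl
    obtain ⟨y, hy⟩ := exists_ne x
    have := hz.two_mul_lastPlaceVotes_lt hP hy
    omega
  · rw [uccWinners_eq_coombsWinners hcw]
    exact notMem_coombsWinners_of_le_two_mul hP hA hn hlast

end Coombs

/-- For exactly three alternatives, the UCC rule satisfies both the Condorcet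
winner criterion and the social disappointment criterion. -/
theorem ucc_satisfies_cwc_and_sdc
    (A : Type) [Fintype A] (hA : Fintype.card A = 3)
    (n : ℕ) (hn : 0 < n)
    (P : Fin n → A → A → Prop) (hP : ∀ i, IsStrictTotalOrder A (P i)) :
    -- Condorcet winner criterion: a (unique) Condorcet winner is always elected
    (∀ x : A,
      (∀ y : A, y ≠ x →
        Nat.card {i : Fin n // P i y x} < Nat.card {i : Fin n // P i x y}) →
      uccWinners P = {x}) ∧
    -- social disappointment criterion
    (∀ x : A,
      n ≤ 2 * Nat.card {i : Fin n // ∀ y : A, y ≠ x → P i y x} →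
      x ∉ uccWinners P) := by
  have hasymm : ∀ i, Std.Asymm (P i) := fun i => inferInstance
  refine ⟨fun x hx => uccWinners_eq_singleton hx, fun x hlast => ?_⟩
  rw [← lastPlaceVotes_univ] at hlast
  exact notMem_uccWinners_of_le_two_mul hasymm hA.ge hn hlast
end

section
/- The Least Unpopular Reselection (LUR) procedure satisfies the Pareto criterion: if every voter ranks a above b, then b is not an LUR winner. -/
open Classical in
/-- One round of the Least Unpopular Reselection (LUR) procedure: keep only the
surviving alternatives with the fewest last-place votes among the survivors. -/
noncomputable def lurStep {A : Type} [Fintype A] {n : ℕ}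
    (P : Fin n → A → A → Prop) (S : Finset A) : Finset A :=
  S.filter (fun x => ∀ y ∈ S, lastPlaceVotes P S x ≤ lastPlaceVotes P S y)

/-- The LUR winners: repeatedly keep the alternatives with the fewest last-place
votes among the survivors until the surviving set stabilizes. -/
noncomputable def lurWinners {A : Type} [Fintype A] {n : ℕ}
    (P : Fin n → A → A → Prop) : Finset A :=
  (lurStep P)^[Fintype.card A] Finset.univ

/-! When b survives to a round, a is present too and no voter ranks a last, so the fewest
last-place votes is zero. The alternative that any one voter ranks last then has a positive
count and is removed: every round that b survives strictly shrinks the surviving set, which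
is impossible for `Fintype.card A` rounds in a row. -/

open Function

theorem Finset.exists_forall_ne_rel {A : Type*} (r : A → A → Prop) [IsStrictTotalOrder A r]
    {S : Finset A} (hS : S.Nonempty) : ∃ z ∈ S, ∀ y ∈ S, y ≠ z → r y z := by
  classical
  let _ := linearOrderOfSTO (swap r)
  exact ⟨S.min' hS, S.min'_mem hS, fun y hy hne => (S.min'_le y hy).lt_of_ne' hne⟩

section LUR

variable {A : Type} [Fintype A] {n : ℕ} {P : Fin n → A → A → Prop} {S : Finset A}

lemma lastPlaceVotes_eq_zero_of_forall_not_rel {a b : A} (hb : b ∈ S) (hba : b ≠ a)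
    (hrank : ∀ i, ¬ P i b a) : lastPlaceVotes P S a = 0 := by
  have : IsEmpty {i : Fin n // ∀ y ∈ S, y ≠ a → P i y a} :=
    ⟨fun ⟨i, hi⟩ => hrank i (hi b hb hba)⟩
  exact Nat.card_of_isEmpty

lemma lastPlaceVotes_pos_of_forall_rel {z : A} (i : Fin n) (hz : ∀ y ∈ S, y ≠ z → P i y z) :
    0 < lastPlaceVotes P S z :=
  have : Nonempty {i : Fin n // ∀ y ∈ S, y ≠ z → P i y z} := ⟨⟨i, hz⟩⟩
  Nat.card_pos

lemma mem_lurStep {x : A} :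
    x ∈ lurStep P S ↔
      x ∈ S ∧ ∀ y ∈ S, lastPlaceVotes P S x ≤ lastPlaceVotes P S y := by
  simp only [lurStep, Finset.mem_filter]

lemma lurStep_subset : lurStep P S ⊆ S :=
  fun _ hx => (mem_lurStep.mp hx).1

lemma mem_lurStep_of_lastPlaceVotes_eq_zero {a : A} (ha : a ∈ S)
    (ha0 : lastPlaceVotes P S a = 0) : a ∈ lurStep P S :=
  mem_lurStep.mpr ⟨ha, fun _ _ => ha0 ▸ Nat.zero_le _⟩

lemma lurStep_ssubset_of_lastPlaceVotes_eq_zero (i : Fin n) [IsStrictTotalOrder A (P i)]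
    {a : A} (ha : a ∈ S) (ha0 : lastPlaceVotes P S a = 0) : lurStep P S ⊂ S := by
  obtain ⟨z, hzS, hz⟩ := S.exists_forall_ne_rel (P i) ⟨a, ha⟩
  have hz_pos : 0 < lastPlaceVotes P S z := lastPlaceVotes_pos_of_forall_rel i hz
  have hz_out : z ∉ lurStep P S := fun hz' => by
    have := (mem_lurStep.mp hz').2 a ha
    omega
  exact Finset.ssubset_iff_of_subset lurStep_subset |>.mpr ⟨z, hzS, hz_out⟩

lemma mem_and_card_add_le_of_mem_iterate_lurStep (i : Fin n) [IsStrictTotalOrder A (P i)]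
    {a b : A} (hba : b ≠ a) (hrank : ∀ j, ¬ P j b a) :
    ∀ k, b ∈ (lurStep P)^[k] Finset.univ →
      a ∈ (lurStep P)^[k] Finset.univ ∧
        k + ((lurStep P)^[k] Finset.univ).card ≤ Fintype.card A
  | 0, _ => by simp
  | k + 1, hb => by
    rw [iterate_succ_apply'] at hb ⊢
    have hbT := lurStep_subset hb
    obtain ⟨haT, hcard⟩ := mem_and_card_add_le_of_mem_iterate_lurStep i hba hrank k hbT
    have ha0 := lastPlaceVotes_eq_zero_of_forall_not_rel hbT hba hrank
    have hlt := Finset.card_lt_card (lurStep_ssubset_of_lastPlaceVotes_eq_zero i haT ha0)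
    exact ⟨mem_lurStep_of_lastPlaceVotes_eq_zero haT ha0, by omega⟩

end LUR

/-- The LUR procedure satisfies the Pareto criterion: if every voter ranks a
above b, then b is not an LUR winner. -/
theorem lur_satisfies_pareto
    (A : Type) [Fintype A]
    (n : ℕ) (hn : 0 < n)
    (P : Fin n → A → A → Prop) (hP : ∀ i, IsStrictTotalOrder A (P i))
    (a b : A) (hab : a ≠ b) (hpar : ∀ i : Fin n, P i a b) :
    b ∉ lurWinners P := by
  intro hb
  have hba : ∀ i, ¬ P i b a := fun i => have := hP i; asymm (hpar i)
  have := hP ⟨0, hn⟩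
  have hcard := (mem_and_card_add_le_of_mem_iterate_lurStep ⟨0, hn⟩ (Ne.symm hab) hba _ hb).2
  have hpos : 0 < ((lurStep P)^[Fintype.card A] Finset.univ).card := Finset.card_pos.mpr ⟨b, hb⟩
  omega
end
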